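/- Let n be an even natural number and S̃_n(x) = Σ_{k=0, k≠n/2}^{n} ((−1)^k / (2ⁿ (n − 2k))) · C(n,k) · sin((n − 2k)·x − nπ/2) + (1/2ⁿ) · C(n, n/2) · x. Then S̃_n is strictly increasing on the interval [−π, 0]; in particular S̃_n is injective there, so the conserved density v(B,r) = r^{2+3n/2} S̃_n(B/r²) is invertible as a function of B for B/r² ∈ [−π, 0]. -/

import Mathlib

/-!
The derivative of `S̃_n` is `sin x ^ n`. Expanding `sin x = (e^{ix} - e^{-ix}) / (2i)` by the
binomial theorem and taking real parts gives the power-reduction formula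
`sin x ^ n = ∑ₖ (-1)^k C(n,k) / 2ⁿ · cos((n - 2k)x - nπ/2)`; the `k`-th term of `S̃_n` is an
antiderivative of the `k`-th term, and for even `n` the linear term is an antiderivative of the
constant `k = n/2` term. For even `n`, `sin x ^ n > 0` on `(-π, 0)`, so `S̃_n` is strictly
increasing on `[-π, 0]`; the rescaled density is a composition of injective maps with it.
-/

open Real Finset

/-- The conserved-density profile for even `n`, with the singular `k = n/2`
term of the formal series replaced by its limit `(1/2ⁿ) C(n,n/2) x`. -/
noncomputable def Seven (n : ℕ) (x : ℝ) : ℝ :=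
  (∑ k ∈ (Finset.range (n + 1)).erase (n / 2),
    ((-1 : ℝ) ^ k / (2 ^ n * ((n : ℝ) - 2 * k))) * (n.choose k : ℝ) *
      Real.sin (((n : ℝ) - 2 * k) * x - (n : ℝ) * π / 2)) +
  (1 / 2 ^ n : ℝ) * (n.choose (n / 2) : ℝ) * x

theorem Complex.sin_pow_eq_sum_exp (n : ℕ) (z : ℂ) :
    Complex.sin z ^ n = ∑ k ∈ range (n + 1),
      (-1) ^ k * n.choose k / 2 ^ n * Complex.exp (((n - 2 * k) * z - n * π / 2) * Complex.I) := by
  have hsin : Complex.sin z = Complex.exp (-(π / 2) * Complex.I) / 2 *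
      (-Complex.exp (-z * Complex.I) + Complex.exp (z * Complex.I)) := by
    rw [neg_mul, Complex.exp_neg, Complex.exp_pi_div_two_mul_I, Complex.inv_I, Complex.sin]
    ring
  rw [hsin, mul_pow, add_pow, mul_sum]
  refine sum_congr rfl fun k hk => ?_
  have hkn : k ≤ n := Nat.lt_succ_iff.mp (mem_range.mp hk)
  have hexp : Complex.exp (-(π / 2) * Complex.I) ^ n * Complex.exp (-z * Complex.I) ^ k *
      Complex.exp (z * Complex.I) ^ (n - k) =
        Complex.exp (((n - 2 * k) * z - n * π / 2) * Complex.I) := by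
    rw [← Complex.exp_nat_mul, ← Complex.exp_nat_mul, ← Complex.exp_nat_mul, ← Complex.exp_add,
      ← Complex.exp_add]
    congr 1
    push_cast [Nat.cast_sub hkn]
    ring
  rw [← hexp, neg_pow, div_pow]
  ring

theorem Real.sin_pow_eq_sum_cos (n : ℕ) (x : ℝ) :
    sin x ^ n = ∑ k ∈ range (n + 1),
      (-1) ^ k * n.choose k / 2 ^ n * cos ((n - 2 * k) * x - n * π / 2) := by
  have h := congrArg Complex.re (Complex.sin_pow_eq_sum_exp n x)
  rw [← Complex.ofReal_sin, ← Complex.ofReal_pow, Complex.ofReal_re, Complex.re_sum] at h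
  rw [h]
  refine sum_congr rfl fun k _ => ?_
  have hc : ((-1) ^ k * n.choose k / 2 ^ n : ℂ) = (((-1) ^ k * n.choose k / 2 ^ n : ℝ) : ℂ) := by
    push_cast; rfl
  have he := Complex.exp_ofReal_mul_I_re ((n - 2 * k) * x - n * π / 2)
  push_cast at he
  rw [hc, Complex.re_ofReal_mul, he]

theorem hasDerivAt_Seven {n : ℕ} (hn : Even n) (x : ℝ) : HasDerivAt (Seven n) (sin x ^ n) x := by
  have h := (HasDerivAt.fun_sum (u := (range (n + 1)).erase (n / 2)) fun k _ =>
    ((((hasDerivAt_id x).const_mul ((n : ℝ) - 2 * k)).sub_const ((n : ℝ) * π / 2)).sin).const_mul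
      ((-1 : ℝ) ^ k / (2 ^ n * ((n : ℝ) - 2 * k)) * n.choose k)).fun_add
    ((hasDerivAt_id x).const_mul ((1 / 2 ^ n : ℝ) * n.choose (n / 2)))
  refine h.congr_deriv ?_
  have hmem : n / 2 ∈ range (n + 1) := mem_range.mpr (by omega)
  rw [sin_pow_eq_sum_cos, ← sum_erase_add _ _ hmem]
  congr 1
  · refine sum_congr rfl fun k hk => ?_
    have hk0 : (n : ℝ) - 2 * k ≠ 0 := by
      intro h0
      have : n = 2 * k := by exact_mod_cast sub_eq_zero.mp h0
      exact (mem_erase.mp hk).1 (by omega)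
    simp only [id, mul_one]
    field_simp
  · obtain ⟨m, rfl⟩ := hn
    have hm : (m + m) / 2 = m := by omega
    have harg : ((m + m : ℕ) - 2 * (m : ℝ)) * x - (m + m : ℕ) * π / 2 = -(m * π) := by
      push_cast; ring
    have hsq : (-1 : ℝ) ^ m * (-1) ^ m = 1 := by rw [← mul_pow]; norm_num
    rw [hm, harg, cos_neg, cos_nat_mul_pi]
    linear_combination (-((m + m).choose m / 2 ^ (m + m) : ℝ)) * hsq

theorem strictMonoOn_Seven {n : ℕ} (hn : Even n) : StrictMonoOn (Seven n) (Set.Icc (-π) 0) := by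
  refine strictMonoOn_of_hasDerivWithinAt_pos (convex_Icc _ _)
    (fun x _ => (hasDerivAt_Seven hn x).continuousAt.continuousWithinAt)
    (fun x _ => (hasDerivAt_Seven hn x).hasDerivWithinAt) fun x hx => ?_
  rw [interior_Icc] at hx
  exact hn.pow_pos (sin_neg_of_neg_of_neg_pi_lt hx.2 hx.1).ne

/-- For even `n`, `S̃_n` is strictly increasing on `[−π, 0]`, hence injective
there, so `v(B,r) = r^{2+3n/2} S̃_n(B/r²)` is invertible in `B` for
`B/r² ∈ [−π, 0]`. -/
theorem Seven_strictMonoOn (n : ℕ) (hn : Even n) :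
    StrictMonoOn (Seven n) (Set.Icc (-π) 0) ∧
    Set.InjOn (Seven n) (Set.Icc (-π) 0) ∧
    (∀ r : ℝ, 0 < r →
      Set.InjOn (fun B : ℝ => r ^ ((2 : ℝ) + 3 * (n : ℝ) / 2) * Seven n (B / r ^ 2))
        {B : ℝ | B / r ^ 2 ∈ Set.Icc (-π) 0}) := by
  have hmono := strictMonoOn_Seven hn
  refine ⟨hmono, hmono.injOn, fun r hr => ?_⟩
  have hr2 : r ^ 2 ≠ 0 := pow_ne_zero 2 hr.ne'
  exact (mul_right_injective₀ (rpow_pos_of_pos hr _).ne').injOn.comp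
    (hmono.injOn.comp (fun _ _ _ _ h => (div_left_inj' hr2).mp h) fun _ hB => hB)
    (Set.mapsTo_univ _ _)
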